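/- In a continuous directed-complete partial order, the sets ↟z = {y | z ≪ y}, for z ranging over a basis Z, form a basis of the Scott topology. -/
import Mathlib


/-- The way-below relation. -/
def WayBelow {Q : Type*} [PartialOrder Q] (x y : Q) : Prop :=
  ∀ S : Set Q, S.Nonempty → DirectedOn (· ≤ ·) S →
    ∀ s : Q, IsLUB S s → y ≤ s → ∃ u ∈ S, x ≤ u

/-- Scott-open sets: upward closed and inaccessible by directed suprema. -/
def ScottOpen {Q : Type*} [PartialOrder Q] (U : Set Q) : Prop :=
  (∀ x y : Q, x ∈ U → x ≤ y → y ∈ U) ∧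
    ∀ S : Set Q, S.Nonempty → DirectedOn (· ≤ ·) S →
      ∀ s : Q, IsLUB S s → s ∈ U → (S ∩ U).Nonempty

lemma WayBelow.le {Q : Type*} [PartialOrder Q] {x y : Q} (h : WayBelow x y) : x ≤ y := by
  obtain ⟨u, hu, hx⟩ := h {y} ⟨y, rfl⟩
    (fun a ha b hb => ⟨y, rfl, by simp_all, by simp_all⟩) y isLUB_singleton le_rfl
  cases hu
  exact hx

lemma WayBelow.mono_left {Q : Type*} [PartialOrder Q] {x b y : Q}
    (hxb : x ≤ b) (h : WayBelow b y) : WayBelow x y := by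
  intro S hS hdir s hs hys
  obtain ⟨u, hu, hb⟩ := h S hS hdir s hs hys
  exact ⟨u, hu, le_trans hxb hb⟩

lemma WayBelow.mono_right {Q : Type*} [PartialOrder Q] {x y y' : Q}
    (h : WayBelow x y) (hyy : y ≤ y') : WayBelow x y' := by
  intro S hS hdir s hs hys
  exact h S hS hdir s hs (le_trans hyy hys)

/-- In a continuous dcpo with basis `Z`, the sets `↟z = {y | z ≪ y}`, `z ∈ Z`,
form a basis of the Scott topology. -/
theorem scott_basis_of_continuous_dcpo {Q : Type*} [PartialOrder Q] (Z : Set Q)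
    (hdc : ∀ S : Set Q, S.Nonempty → DirectedOn (· ≤ ·) S → ∃ s : Q, IsLUB S s)
    (hbasis : ∀ y : Q, ({z ∈ Z | WayBelow z y}).Nonempty ∧
      DirectedOn (· ≤ ·) {z ∈ Z | WayBelow z y} ∧ IsLUB {z ∈ Z | WayBelow z y} y) :
    (∀ z ∈ Z, ScottOpen {y : Q | WayBelow z y}) ∧
      ∀ U : Set Q, ScottOpen U → ∀ y ∈ U,
        ∃ z ∈ Z, WayBelow z y ∧ {w : Q | WayBelow z w} ⊆ U := by
  constructor
  · intro z _hz
    constructor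
    · intro x y hx hxy
      exact hx.mono_right hxy
    · intro S hS hdir s hs hzs
      -- D = union of bases of elements of S
      set D : Set Q := {b ∈ Z | ∃ u ∈ S, WayBelow b u} with hD
      have hDne : D.Nonempty := by
        obtain ⟨u, hu⟩ := hS
        obtain ⟨⟨b, hbZ, hbu⟩, _, _⟩ := hbasis u
        exact ⟨b, hbZ, u, hu, hbu⟩
      have hDdir : DirectedOn (· ≤ ·) D := by
        rintro b₁ ⟨hb₁Z, u₁, hu₁, hwb₁⟩ b₂ ⟨hb₂Z, u₂, hu₂, hwb₂⟩
        obtain ⟨u, hu, h₁, h₂⟩ := hdir u₁ hu₁ u₂ hu₂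
        obtain ⟨_, hudir, _⟩ := hbasis u
        obtain ⟨b, ⟨hbZ, hbu⟩, hle₁, hle₂⟩ := hudir b₁ ⟨hb₁Z, hwb₁.mono_right h₁⟩
          b₂ ⟨hb₂Z, hwb₂.mono_right h₂⟩
        exact ⟨b, ⟨hbZ, u, hu, hbu⟩, hle₁, hle₂⟩
      have hDlub : IsLUB D s := by
        constructor
        · rintro b ⟨_, u, hu, hwb⟩
          exact le_trans hwb.le (hs.1 hu)
        · intro w hw
          apply hs.2
          intro u hu
          obtain ⟨_, _, hulub⟩ := hbasis u
          apply hulub.2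
          rintro b ⟨hbZ, hbu⟩
          exact hw ⟨hbZ, u, hu, hbu⟩
      obtain ⟨b, ⟨_, u, hu, hbu⟩, hzb⟩ := hzs D hDne hDdir s hDlub le_rfl
      exact ⟨u, hu, hbu.mono_left hzb⟩
  · intro U hU y hy
    obtain ⟨hne, hdir, hlub⟩ := hbasis y
    obtain ⟨z, ⟨hzZ, hzy⟩, hzU⟩ := hU.2 _ hne hdir y hlub hy
    exact ⟨z, hzZ, hzy, fun w hw => hU.1 z w hzU hw.le⟩
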